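/- In the generated argument model over a finite epistemic model (S,F), the principal filters τ(t) for t ∈ S are exactly the ultrafilters over the strength preorder, provided the model is nontrivial and worlds are separated by the valuation (for distinct t,u there is p with exactly one of t,u in F(p)). -/
import Mathlib


namespace Paper

variable {S P I : Type*}

/-- Possible arguments: nonempty subsets of the set of worlds. -/
abbrev Arg (S : Type*) := {U : Set S // U.Nonempty}

/-- Generated attack relation: `atk F p U V` means `(U,V) ∈ A(p)`, i.e. `V` attacks `U`
w.r.t. `p`: ∃ t ∈ U, ∀ r ∈ V, exactly one of t, r lies in F p. -/
def atk (F : P → Set S) (p : P) (U V : Arg S) : Prop :=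
  ∃ t ∈ U.1, ∀ r ∈ V.1, (t ∈ F p ∧ r ∉ F p) ∨ (t ∉ F p ∧ r ∈ F p)

/-- Strength preorder: `str F U V` means `U ≤ V` (U at least as strong as V). -/
def str (F : P → Set S) (U V : Arg S) : Prop :=
  ∀ (p : P) (W : Arg S), atk F p W V → atk F p W U

/-- The singleton argument {t}. -/
def sArg (t : S) : Arg S := ⟨{t}, Set.singleton_nonempty t⟩

/-- τ(t) = {U : {t} ≤ U}. -/
def tau (F : P → Set S) (t : S) : Set (Arg S) := {U | str F (sArg t) U}

/-- A filter over a preorder-like relation `le`. -/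
structure IsPFilter {α : Type*} (le : α → α → Prop) (F : Set α) : Prop where
  nonempty : F.Nonempty
  upward : ∀ U ∈ F, ∀ W, le U W → W ∈ F
  directed : ∀ U ∈ F, ∀ V ∈ F, ∃ W ∈ F, le W U ∧ le W V

/-- An ultrafilter over `le`: a proper filter maximal among filters under inclusion. -/
def IsUltra {α : Type*} (le : α → α → Prop) (F : Set α) : Prop :=
  IsPFilter le F ∧ F ≠ Set.univ ∧ ∀ G, IsPFilter le G → F ⊆ G → G = F

/-- Strength preorder on an abstract argument model with attack `A`. -/
def le' {W P : Type*} (A : P → W → W → Prop) (U V : W) : Prop :=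
  ∀ p X, A p X V → A p X U

/-- Availability in the argument model generated at world `s`:
`G(i) = {U | [s]_i ⊆ U}`. -/
def Gav (E : I → S → S → Prop) (s : S) (i : I) : Set (Arg S) :=
  {U | ∀ u, E i s u → u ∈ U.1}

private lemma str_trans' (F : P → Set S) {U V W : Arg S} (h1 : str F U V) (h2 : str F V W) :
    str F U W := fun p X h => h1 p X (h2 p X h)

private lemma sArg_str_of_mem (F : P → Set S) {t : S} {M : Arg S} (ht : t ∈ M.1) :
    str F (sArg t) M := by
  rintro p X ⟨x, hx, hall⟩
  refine ⟨x, hx, fun r hr => ?_⟩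
  have hr' : r = t := hr
  subst hr'
  exact hall _ ht

private lemma tau_filter (F : P → Set S) (t : S) : IsPFilter (str F) (tau F t) := by
  refine ⟨⟨sArg t, fun p X h => h⟩, ?_, ?_⟩
  · intro U hU W hUW
    exact str_trans' F hU hUW
  · intro U hU V hV
    exact ⟨sArg t, fun p X h => h, hU, hV⟩

private lemma exists_min [Fintype S] (F : P → Set S) {G : Set (Arg S)}
    (hG : IsPFilter (str F) G) : ∃ M ∈ G, ∀ U ∈ G, str F M U := by
  classical
  have hfin : G.Finite := Set.toFinite G
  have key : ∀ T : Finset (Arg S), ↑T ⊆ G → ∃ M ∈ G, ∀ U ∈ T, str F M U := by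
    intro T
    induction T using Finset.induction_on with
    | empty =>
      intro _
      obtain ⟨U, hU⟩ := hG.nonempty
      exact ⟨U, hU, fun V hV => absurd hV (Finset.notMem_empty V)⟩
    | @insert a T ha ih =>
      intro hsub
      obtain ⟨M, hM, hMall⟩ := ih fun y hy => hsub (Finset.mem_insert_of_mem hy)
      have haG : a ∈ G := hsub (Finset.mem_insert_self _ _)
      obtain ⟨N, hN, hN1, hN2⟩ := hG.directed a haG M hM
      refine ⟨N, hN, fun U hU => ?_⟩
      rcases Finset.mem_insert.1 hU with rfl | hU
      · exact hN1
      · exact str_trans' F hN2 (hMall U hU)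
  obtain ⟨M, hM, hMall⟩ := key hfin.toFinset (fun x hx => hfin.mem_toFinset.1 hx)
  exact ⟨M, hM, fun U hU => hMall U (hfin.mem_toFinset.2 hU)⟩

/-- over a finite, valuation-separated, nontrivial epistemic
model, the ultrafilters over the strength preorder are exactly the principal
filters τ(t). -/
theorem ultrafilters_are_principal [Fintype S] (F : P → Set S)
    (hnontrivial : ∃ 𝕌 : Set (Arg S), IsUltra (str F) 𝕌)
    (hsep : ∀ t u : S, t ≠ u →
      ∃ p, (t ∈ F p ∧ u ∉ F p) ∨ (t ∉ F p ∧ u ∈ F p)) :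
    ∀ 𝕌 : Set (Arg S), IsUltra (str F) 𝕌 ↔ ∃ t : S, 𝕌 = tau F t := by
  obtain ⟨𝕌₀, h𝕌₀⟩ := hnontrivial
  intro 𝕌
  constructor
  · rintro ⟨hUF, hUne, hUmax⟩
    obtain ⟨M, hM, hMall⟩ := exists_min F hUF
    obtain ⟨t, ht⟩ := M.2
    have hsub : 𝕌 ⊆ tau F t := fun U hU =>
      str_trans' F (sArg_str_of_mem F ht) (hMall U hU)
    exact ⟨t, (hUmax (tau F t) (tau_filter F t) hsub).symm⟩
  · rintro ⟨t, rfl⟩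
    refine ⟨tau_filter F t, ?_, ?_⟩
    · intro h
      have huniv : IsPFilter (str F) (Set.univ : Set (Arg S)) := by
        refine ⟨⟨sArg t, trivial⟩, fun _ _ W _ => trivial, fun U _ V _ => ?_⟩
        have hU : U ∈ tau F t := h ▸ (Set.mem_univ U)
        have hV : V ∈ tau F t := h ▸ (Set.mem_univ V)
        exact ⟨sArg t, trivial, hU, hV⟩
      exact h𝕌₀.2.1 (h𝕌₀.2.2 Set.univ huniv (Set.subset_univ _)).symm
    · intro G hG hsub
      refine Set.Subset.antisymm (fun V hV => ?_) hsub
      obtain ⟨M, hM, hMall⟩ := exists_min F hG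
      have hMt : str F M (sArg t) := hMall (sArg t) (hsub (fun p X h => h))
      have hMsub : M.1 ⊆ {t} := by
        intro u hu
        by_contra hne
        have hut : u ≠ t := hne
        obtain ⟨p, hp⟩ := hsep t u (Ne.symm hut)
        have hatk : atk F p (sArg u) (sArg t) := by
          refine ⟨u, rfl, fun r hr => ?_⟩
          have hr' : r = t := hr
          subst hr'
          rcases hp with ⟨h1, h2⟩ | ⟨h1, h2⟩
          · exact Or.inr ⟨h2, h1⟩
          · exact Or.inl ⟨h2, h1⟩
        obtain ⟨x, hx, hall⟩ := hMt p (sArg u) hatk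
        have hx' : x = u := hx
        subst hx'
        rcases hall x hu with ⟨h1, h2⟩ | ⟨h1, h2⟩
        · exact h2 h1
        · exact h1 h2
      have hMeq : M.1 = {t} := hMsub.antisymm (by
        obtain ⟨m, hm⟩ := M.2
        have : m = t := hMsub hm
        rintro r rfl
        exact this ▸ hm)
      have htM : str F (sArg t) M := sArg_str_of_mem F (by rw [hMeq]; rfl)
      exact str_trans' F htM (hMall V hV)


end Paper
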